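/- arXiv:2007.08183 — 3 statements merged into one kernel-verified Lean document; each statement's English description precedes it below -/
import Mathlib

section
/- For every integer p ≥ 0, (4/π) ∫_0^∞ y^{−3} cos(p y) (1 − cos y)² dy = r_p. In particular, for p = 0 this reads ∫_0^∞ y^{−3} (1 − cos y)² dy = ln 2. -/
/-!
Since `cos b (1 - cos c)² = ¼ cos (b - 2c) - cos (b - c) + (3/2) cos b - cos (b + c)
+ ¼ cos (b + 2c)`, the integrand is `y⁻³ ∑ cᵢ cos (aᵢ y)` with `∑ cᵢ = ∑ cᵢ aᵢ² = 0`, hence equal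
to `∑ cᵢ K_{aᵢ} y` for the kernels `K_a y = (cos (a y) - 1 + a² (1 - cos y)) / y³`
(`cosKernel a y`), each integrable on `(0, ∞)`.
With `F u = (cos u - 1) / u³` one has `K_a y = a³ F (a y) - a² F y`, so the substitution `u = a y`
gives `∫_ε^∞ K_a = a² ∫_{aε}^ε F`. As `F u + 1/(2u) = cosRemainder u = O(u)` near `0`, this tends
to `a² log a / 2` as `ε → 0`.
-/

open MeasureTheory

/-- `r_p`, with the convention `m² ln|m| = 0` when `m = 0` (automatic since `Real.log 0 = 0`). -/
noncomputable def rFn (p : ℕ) : ℝ :=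
  (1 / (2 * Real.pi)) *
    (((p : ℝ) - 2) ^ 2 * Real.log |(p : ℝ) - 2| - 4 * ((p : ℝ) - 1) ^ 2 * Real.log |(p : ℝ) - 1|
      + 6 * (p : ℝ) ^ 2 * Real.log (p : ℝ) - 4 * ((p : ℝ) + 1) ^ 2 * Real.log ((p : ℝ) + 1)
      + ((p : ℝ) + 2) ^ 2 * Real.log ((p : ℝ) + 2))

open Real Set Filter Topology

lemma abs_cos_sub_one_add_sq_div_two_le (x : ℝ) : |cos x - 1 + x ^ 2 / 2| ≤ x ^ 4 / 24 := by
  have half_angle : cos x - 1 + x ^ 2 / 2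
      = 2 * ((x / 2 + sin (x / 2)) * (x / 2 - sin (x / 2))) := by
    have h := cos_two_mul (x / 2)
    rw [mul_div_cancel₀ x two_ne_zero] at h
    linear_combination h + 2 * sin_sq_add_cos_sq (x / 2)
  have h₁ : |x / 2 + sin (x / 2)| ≤ |x| := by
    have := abs_sin_le_abs (x := x / 2)
    calc |x / 2 + sin (x / 2)| ≤ |x / 2| + |sin (x / 2)| := abs_add_le _ _
      _ ≤ |x| := by rw [abs_div, abs_two] at *; linarith
  have h₂ : |x / 2 - sin (x / 2)| ≤ |x| ^ 3 / 48 := by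
    have := abs_sub_sin_le (x / 2)
    rw [abs_div, abs_two] at this
    linarith
  calc |cos x - 1 + x ^ 2 / 2| = 2 * (|x / 2 + sin (x / 2)| * |x / 2 - sin (x / 2)|) := by
        rw [half_angle, abs_mul, abs_mul, abs_two]
    _ ≤ 2 * (|x| * (|x| ^ 3 / 48)) := by gcongr
    _ = x ^ 4 / 24 := by rw [← Even.pow_abs (by decide : Even 4) x]; ring

-- `x / 0 = 0` makes `cosRemainder 0 = 0`, and with this value `cosRemainder` is continuous.
noncomputable def cosRemainder (u : ℝ) : ℝ := (cos u - 1 + u ^ 2 / 2) / u ^ 3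

lemma abs_cosRemainder_le (u : ℝ) : |cosRemainder u| ≤ |u| / 24 := by
  rcases eq_or_ne u 0 with rfl | hu
  · simp [cosRemainder]
  rw [cosRemainder, abs_div, abs_pow, div_le_iff₀ (by positivity)]
  calc |cos u - 1 + u ^ 2 / 2| ≤ u ^ 4 / 24 := abs_cos_sub_one_add_sq_div_two_le u
    _ = |u| / 24 * |u| ^ 3 := by rw [← Even.pow_abs (by decide : Even 4) u]; ring

lemma continuous_cosRemainder : Continuous cosRemainder := by
  refine continuous_iff_continuousAt.2 fun u ↦ ?_
  rcases eq_or_ne u 0 with rfl | hu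
  · have : Tendsto (fun v : ℝ ↦ |v| / 24) (𝓝 0) (𝓝 0) := by
      simpa using (continuous_abs.div_const (24 : ℝ)).tendsto (0 : ℝ)
    simpa [ContinuousAt, cosRemainder] using
      squeeze_zero_norm (fun v ↦ abs_cosRemainder_le v) this
  · exact ((by fun_prop : Continuous fun v : ℝ ↦ cos v - 1 + v ^ 2 / 2).continuousAt).div
      (by fun_prop) (pow_ne_zero 3 hu)

lemma rpow_neg_three (y : ℝ) : y ^ (-3 : ℝ) = (y ^ 3)⁻¹ := by
  rw [rpow_neg_ofNat, zpow_neg, zpow_ofNat]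

lemma integrableOn_Ioi_of_abs_le_div_cube {f : ℝ → ℝ} {b : ℝ} (hb : 0 < b)
    (hf : AEStronglyMeasurable f (volume.restrict (Ioi b))) (C : ℝ)
    (hC : ∀ y, b < y → |f y| ≤ C / y ^ 3) : IntegrableOn f (Ioi b) := by
  refine ((integrableOn_Ioi_rpow_of_lt (by norm_num : (-3 : ℝ) < -1) hb).const_mul C).mono' hf ?_
  filter_upwards [ae_restrict_mem measurableSet_Ioi] with y hy
  simpa [rpow_neg_three, div_eq_mul_inv] using hC y hy

lemma integrableOn_cos_sub_one_div_cube {b : ℝ} (hb : 0 < b) :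
    IntegrableOn (fun u ↦ (cos u - 1) / u ^ 3) (Ioi b) := by
  refine integrableOn_Ioi_of_abs_le_div_cube hb (by fun_prop : Measurable _).aestronglyMeasurable
    2 fun u hu ↦ ?_
  have := neg_one_le_cos u
  have := cos_le_one u
  have hu0 : 0 < u := hb.trans hu
  rw [abs_div, abs_of_pos (by positivity : 0 < u ^ 3)]
  gcongr
  rw [abs_le]; constructor <;> linarith

noncomputable def cosKernel (a y : ℝ) : ℝ := (cos (a * y) - 1 + a ^ 2 * (1 - cos y)) / y ^ 3

lemma cosKernel_eq_cosRemainder (a y : ℝ) :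
    cosKernel a y = a ^ 3 * cosRemainder (a * y) - a ^ 2 * cosRemainder y := by
  rcases eq_or_ne a 0 with rfl | ha
  · simp [cosKernel]
  rcases eq_or_ne y 0 with rfl | hy
  · simp [cosKernel, cosRemainder]
  simp only [cosKernel, cosRemainder]
  field_simp
  ring

lemma cosKernel_eq_sub (a y : ℝ) :
    cosKernel a y = a ^ 3 * ((cos (a * y) - 1) / (a * y) ^ 3) - a ^ 2 * ((cos y - 1) / y ^ 3) := by
  rcases eq_or_ne a 0 with rfl | ha
  · simp [cosKernel]
  rcases eq_or_ne y 0 with rfl | hy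
  · simp [cosKernel]
  simp only [cosKernel]
  field_simp
  ring

lemma cosKernel_neg (a : ℝ) : cosKernel (-a) = cosKernel a := by
  ext y
  simp [cosKernel]

lemma continuous_cosKernel (a : ℝ) : Continuous (cosKernel a) := by
  simp only [funext (cosKernel_eq_cosRemainder a)]
  have := continuous_cosRemainder
  fun_prop

lemma integrableOn_cosKernel (a : ℝ) : IntegrableOn (cosKernel a) (Ioi 0) := by
  have near_zero : IntegrableOn (cosKernel a) (Ioc 0 1) :=
    ((continuous_cosKernel a).integrableOn_Icc).mono_set Ioc_subset_Icc_self
  have near_infty : IntegrableOn (cosKernel a) (Ioi 1) := by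
    refine integrableOn_Ioi_of_abs_le_div_cube one_pos
      (continuous_cosKernel a).aestronglyMeasurable (2 + 2 * a ^ 2) fun y hy ↦ ?_
    have := neg_one_le_cos (a * y)
    have := cos_le_one (a * y)
    have := neg_one_le_cos y
    have := cos_le_one y
    have := sq_nonneg a
    rw [cosKernel, abs_div, abs_of_pos (by positivity : 0 < y ^ 3)]
    gcongr
    rw [abs_le]; constructor <;> nlinarith
  simpa [Ioc_union_Ioi_eq_Ioi zero_le_one] using near_zero.union near_infty

lemma setIntegral_Ioi_cosKernel {a ε : ℝ} (ha : 0 < a) (hε : 0 < ε) :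
    ∫ y in Ioi ε, cosKernel a y = a ^ 2 * ((∫ u in a * ε..ε, cosRemainder u) + log a / 2) := by
  set F : ℝ → ℝ := fun u ↦ (cos u - 1) / u ^ 3
  have hF : ∀ {b}, 0 < b → IntegrableOn F (Ioi b) := integrableOn_cos_sub_one_div_cube
  have hFa : IntegrableOn (fun y ↦ F (a * y)) (Ioi ε) :=
    (integrableOn_Ioi_comp_mul_left_iff F ε ha).2 (hF (by positivity))
  have scaling : ∫ y in Ioi ε, cosKernel a y = a ^ 2 * ∫ u in a * ε..ε, F u := by
    simp only [cosKernel_eq_sub]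
    rw [integral_sub (hFa.const_mul _) ((hF hε).const_mul _), integral_const_mul,
      integral_const_mul, integral_comp_mul_left_Ioi F ε ha, smul_eq_mul,
      ← intervalIntegral.integral_Ioi_sub_Ioi' (hF (by positivity)) (hF hε)]
    field_simp
  have hFE : F = fun u ↦ cosRemainder u - u⁻¹ / 2 := by
    ext u
    rcases eq_or_ne u 0 with rfl | hu
    · simp [F, cosRemainder]
    simp only [F, cosRemainder]
    field_simp
    ring
  have hinv : ∫ u in a * ε..ε, u⁻¹ = -log a := by
    rw [integral_inv_of_pos (by positivity) hε, div_mul_cancel_right₀ hε.ne', log_inv]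
  rw [scaling, hFE, intervalIntegral.integral_sub (continuous_cosRemainder.intervalIntegrable _ _),
    intervalIntegral.integral_div, hinv]
  · ring
  · exact (intervalIntegrable_inv_iff.2 (Or.inr (notMem_uIcc_of_lt (by positivity) hε))).div_const 2

lemma integral_cosKernel (a : ℝ) : ∫ y in Ioi 0, cosKernel a y = a ^ 2 * log a / 2 := by
  wlog ha : 0 < a generalizing a
  · rcases (not_lt.1 ha).eq_or_lt with rfl | ha
    · simp [cosKernel]
    · simpa [cosKernel_neg] using this (-a) (neg_pos.2 ha)
  let φ : ℝ → ℝ := fun ε ↦ (∫ y in 0..ε, cosKernel a y) +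
    a ^ 2 * ((∫ u in 0..ε, cosRemainder u) - ∫ u in 0..a * ε, cosRemainder u)
  have hφ : Continuous φ := by
    have hK := intervalIntegral.continuous_primitive (μ := volume)
      (fun _ _ ↦ (continuous_cosKernel a).intervalIntegrable _ _) 0
    have hR := intervalIntegral.continuous_primitive (μ := volume)
      (fun _ _ ↦ continuous_cosRemainder.intervalIntegrable _ _) 0
    fun_prop
  have hφ_eq : ∀ ε > 0, φ ε = (∫ y in Ioi 0, cosKernel a y) - a ^ 2 * log a / 2 := by
    intro ε hε
    rw [← intervalIntegral.integral_interval_add_Ioi (integrableOn_cosKernel a)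
      ((integrableOn_cosKernel a).mono_set (Ioi_subset_Ioi hε.le)), setIntegral_Ioi_cosKernel ha hε,
      ← intervalIntegral.integral_interval_sub_left (continuous_cosRemainder.intervalIntegrable _ _)
        (continuous_cosRemainder.intervalIntegrable _ _)]
    ring
  have h₀ : Tendsto φ (𝓝[>] 0) (𝓝 0) := by
    simpa [φ] using hφ.continuousWithinAt.tendsto (s := Ioi 0) (x := 0)
  have h₁ : Tendsto φ (𝓝[>] 0) (𝓝 ((∫ y in Ioi 0, cosKernel a y) - a ^ 2 * log a / 2)) :=
    tendsto_const_nhds.congr' (eventually_nhdsWithin_of_forall fun ε hε ↦ (hφ_eq ε hε).symm)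
  linarith [tendsto_nhds_unique h₁ h₀]

lemma integral_sum_cos_div_cube {ι : Type*} (s : Finset ι) (c a : ι → ℝ)
    (hc : ∑ i ∈ s, c i = 0) (hca : ∑ i ∈ s, c i * a i ^ 2 = 0) :
    ∫ y in Ioi 0, (∑ i ∈ s, c i * cos (a i * y)) / y ^ 3
      = ∑ i ∈ s, c i * (a i ^ 2 * log (a i) / 2) := by
  have h : ∀ y, (∑ i ∈ s, c i * cos (a i * y)) / y ^ 3 = ∑ i ∈ s, c i * cosKernel (a i) y := by
    intro y
    have moments : ∑ i ∈ s, c i * cos (a i * y)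
        = ∑ i ∈ s, c i * (cos (a i * y) - 1 + a i ^ 2 * (1 - cos y)) := by
      simp only [mul_add, mul_sub, Finset.sum_add_distrib, Finset.sum_sub_distrib, mul_one,
        ← mul_assoc, ← Finset.sum_mul, hc, hca]
      ring
    simp only [moments, cosKernel, Finset.sum_div, mul_div_assoc]
  simp only [h]
  rw [integral_finsetSum _ fun i _ ↦ (integrableOn_cosKernel (a i)).const_mul (c i)]
  simp only [integral_const_mul, integral_cosKernel]

lemma cos_mul_one_sub_cos_sq (b c : ℝ) :
    cos b * (1 - cos c) ^ 2 = cos (b - 2 * c) / 4 - cos (b - c) + 3 / 2 * cos b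
      - cos (b + c) + cos (b + 2 * c) / 4 := by
  simp only [cos_add, cos_sub, cos_two_mul, sin_two_mul]
  ring

lemma integral_rpow_neg_three_mul_cos_mul_one_sub_cos_sq (P : ℝ) :
    ∫ y in Ioi 0, y ^ (-3 : ℝ) * cos (P * y) * (1 - cos y) ^ 2
      = ((P - 2) ^ 2 * log (P - 2) - 4 * (P - 1) ^ 2 * log (P - 1) + 6 * P ^ 2 * log P
          - 4 * (P + 1) ^ 2 * log (P + 1) + (P + 2) ^ 2 * log (P + 2)) / 8 := by
  let c : Fin 5 → ℝ := ![1 / 4, -1, 3 / 2, -1, 1 / 4]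
  let a : Fin 5 → ℝ := ![P - 2, P - 1, P, P + 1, P + 2]
  have integrand : ∀ y : ℝ, y ^ (-3 : ℝ) * cos (P * y) * (1 - cos y) ^ 2
      = (∑ i, c i * cos (a i * y)) / y ^ 3 := by
    intro y
    rw [rpow_neg_three, mul_assoc, cos_mul_one_sub_cos_sq]
    simp only [Fin.sum_univ_five, Matrix.cons_val_zero, Matrix.cons_val_one, Matrix.cons_val, c, a]
    ring_nf
  have hc : ∑ i, c i = 0 := by
    simp only [Fin.sum_univ_five, Matrix.cons_val_zero, Matrix.cons_val_one, Matrix.cons_val, c]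
    norm_num
  have hca : ∑ i, c i * a i ^ 2 = 0 := by
    simp only [Fin.sum_univ_five, Matrix.cons_val_zero, Matrix.cons_val_one, Matrix.cons_val, c, a]
    ring
  rw [funext integrand, integral_sum_cos_div_cube _ c a hc hca]
  simp only [Fin.sum_univ_five, Matrix.cons_val_zero, Matrix.cons_val_one, Matrix.cons_val, c, a]
  ring

theorem stmt4 :
    (∀ p : ℕ,
      (4 / Real.pi) *
          ∫ y in Set.Ioi (0 : ℝ),
            y ^ (-3 : ℝ) * Real.cos ((p : ℝ) * y) * (1 - Real.cos y) ^ 2 = rFn p) ∧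
    ∫ y in Set.Ioi (0 : ℝ), y ^ (-3 : ℝ) * (1 - Real.cos y) ^ 2 = Real.log 2 := by
  refine ⟨fun p ↦ ?_, ?_⟩
  · rw [integral_rpow_neg_three_mul_cos_mul_one_sub_cos_sq, rFn, log_abs, log_abs]
    field_simp
    ring
  · convert integral_rpow_neg_three_mul_cos_mul_one_sub_cos_sq 0 using 1
    · simp
    · simp only [zero_sub, zero_add, log_neg_eq_log, log_one]
      ring
end

section
/- One has r₀ = (4/π) ln 2 > 0, and for every integer p ≥ 1, r_p < r_{p+1} < 0. -/
open Real Set fwdDiff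

section FwdDiff

variable {f f' : ℝ → ℝ} {a h : ℝ}

theorem ContinuousOn.fwdDiff_iter (hf : ContinuousOn f (Ici a)) (hh : 0 ≤ h) (n : ℕ) :
    ContinuousOn (Δ_[h] ^[n] f) (Ici a) := by
  induction n with
  | zero => exact hf
  | succ n ih =>
    rw [Function.iterate_succ_apply']
    exact (ih.comp (continuousOn_id.add continuousOn_const)
      fun y hy => le_add_of_le_of_nonneg hy hh).sub ih

theorem hasDerivAt_fwdDiff_iter (hf : ∀ y, a < y → HasDerivAt f (f' y) y) (hh : 0 ≤ h)
    (n : ℕ) {y : ℝ} (hy : a < y) : HasDerivAt (Δ_[h] ^[n] f) (Δ_[h] ^[n] f' y) y := by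
  induction n generalizing y with
  | zero => exact hf y hy
  | succ n ih =>
    rw [Function.iterate_succ_apply', Function.iterate_succ_apply']
    exact (ih (lt_add_of_lt_of_nonneg hy hh)).comp_add_const.sub (ih hy)

theorem fwdDiff_iter_succ_pos (hh : 0 < h) (hf : ContinuousOn f (Ici a))
    (hf' : ∀ y, a < y → HasDerivAt f (f' y) y) {n : ℕ}
    (hpos : ∀ y, a < y → 0 < Δ_[h] ^[n] f' y) {y : ℝ} (hy : a ≤ y) :
    0 < Δ_[h] ^[n + 1] f y := by
  have hmono : StrictMonoOn (Δ_[h] ^[n] f) (Ici a) := by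
    refine strictMonoOn_of_hasDerivWithinAt_pos (f' := Δ_[h] ^[n] f') (convex_Ici a)
      (hf.fwdDiff_iter hh.le n) (fun x hx => ?_) fun x hx => ?_
    · rw [interior_Ici] at hx ⊢
      exact (hasDerivAt_fwdDiff_iter hf' hh.le n hx).hasDerivWithinAt
    · rw [interior_Ici] at hx
      exact hpos x hx
  rw [Function.iterate_succ_apply', fwdDiff, sub_pos]
  exact hmono hy (le_add_of_le_of_nonneg hy hh.le) (lt_add_of_pos_right y hh)

theorem fwdDiff_iter_pos_of_hasDerivAt (hh : 0 < h) :
    ∀ (n : ℕ) (F : ℕ → ℝ → ℝ), (∀ k < n, ∀ y, a < y → HasDerivAt (F k) (F (k + 1) y) y) →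
      (∀ y, a < y → 0 < F n y) → ∀ y, a < y → 0 < Δ_[h] ^[n] (F 0) y
  | 0, _, _, hpos => hpos
  | n + 1, F, hF, hpos => fun y hy =>
    fwdDiff_iter_succ_pos hh
      (fun z hz => (hF 0 n.succ_pos z (hy.trans_le hz)).continuousAt.continuousWithinAt)
      (fun z hz => hF 0 n.succ_pos z (hy.trans hz))
      (fun z hz => fwdDiff_iter_pos_of_hasDerivAt hh n (fun k => F (k + 1))
        (fun k hk => hF (k + 1) (by omega)) hpos z (hy.trans hz))
      le_rfl

end FwdDiff

noncomputable def sqMulLogDeriv : ℕ → ℝ → ℝ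
  | 0 => fun y => y ^ 2 * log y
  | 1 => fun y => 2 * y * log y + y
  | 2 => fun y => 2 * log y + 3
  | k + 3 => fun y => 2 * (-1) ^ k * k.factorial * y ^ (-(k + 1 : ℤ))

theorem hasDerivAt_sqMulLogDeriv (k : ℕ) {y : ℝ} (hy : 0 < y) :
    HasDerivAt (sqMulLogDeriv k) (sqMulLogDeriv (k + 1) y) y := by
  match k with
  | 0 =>
    exact ((hasDerivAt_pow 2 y).mul (hasDerivAt_log hy.ne')).congr_deriv <| by
      simp only [sqMulLogDeriv]
      field_simp
      ring
  | 1 =>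
    exact ((((hasDerivAt_id y).const_mul 2).mul (hasDerivAt_log hy.ne')).add
      (hasDerivAt_id y)).congr_deriv <| by
      simp only [sqMulLogDeriv, id]
      field_simp
      ring
  | 2 =>
    exact (((hasDerivAt_log hy.ne').const_mul 2).add_const 3).congr_deriv <| by
      simp [sqMulLogDeriv]
  | k + 3 =>
    exact ((hasDerivAt_zpow (-(k + 1 : ℤ)) y (.inl hy.ne')).const_mul
      (2 * (-1) ^ k * (k.factorial : ℝ))).congr_deriv <| by
      simp only [sqMulLogDeriv, Nat.factorial_succ]
      push_cast
      ring_nf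

theorem neg_one_pow_mul_sqMulLogDeriv_add_three_pos (k : ℕ) {y : ℝ} (hy : 0 < y) :
    0 < (-1) ^ k * sqMulLogDeriv (k + 3) y := by
  have hsq : ((-1 : ℝ) ^ k) * (-1) ^ k = 1 := by rw [← mul_pow]; norm_num
  simp only [sqMulLogDeriv]
  calc (0 : ℝ) < 2 * k.factorial * y ^ (-(k + 1 : ℤ)) := by positivity
    _ = _ := by linear_combination (2 * k.factorial * y ^ (-(k + 1 : ℤ))) * hsq.symm

theorem continuous_sqMulLogDeriv_zero : Continuous (sqMulLogDeriv 0) := by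
  have h : sqMulLogDeriv 0 = fun y => y * (y * log y) := by
    funext y; simp only [sqMulLogDeriv]; ring
  rw [h]
  exact continuous_id.mul continuous_mul_log

theorem neg_one_pow_mul_fwdDiff_iter_sqMulLog_pos {h : ℝ} (hh : 0 < h) (k : ℕ) {y : ℝ}
    (hy : 0 ≤ y) : 0 < (-1) ^ k * Δ_[h] ^[k + 3] (sqMulLogDeriv 0) y := by
  set F : ℕ → ℝ → ℝ := fun j => (-1 : ℝ) ^ k • sqMulLogDeriv j with hF
  have hderiv (j : ℕ) {z : ℝ} (hz : 0 < z) : HasDerivAt (F j) (F (j + 1) z) z :=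
    (hasDerivAt_sqMulLogDeriv j hz).const_smul ((-1 : ℝ) ^ k)
  have hpos := fwdDiff_iter_pos_of_hasDerivAt hh (k + 2) (fun j => F (j + 1))
    (fun j _ z hz => hderiv (j + 1) hz)
    (fun z hz => neg_one_pow_mul_sqMulLogDeriv_add_three_pos k hz)
  have := fwdDiff_iter_succ_pos hh (continuous_sqMulLogDeriv_zero.const_smul _).continuousOn
    (fun z hz => hderiv 0 hz) hpos (a := 0) hy
  simpa only [hF, fwdDiff_iter_const_smul, Pi.smul_apply, smul_eq_mul] using this

theorem rFn_eq_fwdDiff_iter (p : ℕ) :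
    rFn p = 1 / (2 * π) * Δ_[1] ^[4] (sqMulLogDeriv 0) (p - 2) := by
  simp only [rFn, fwdDiff_iter_eq_sum_shift, Finset.sum_range_succ, Finset.sum_range_zero,
    sqMulLogDeriv, log_abs]
  norm_num [Nat.choose]
  ring_nf

theorem rFn_succ_sub_rFn (p : ℕ) :
    rFn (p + 1) - rFn p = 1 / (2 * π) * Δ_[1] ^[5] (sqMulLogDeriv 0) (p - 2) := by
  rw [rFn_eq_fwdDiff_iter, rFn_eq_fwdDiff_iter, Function.iterate_succ_apply' _ 4, fwdDiff]
  push_cast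
  ring_nf

theorem rFn_neg {p : ℕ} (hp : 2 ≤ p) : rFn p < 0 := by
  have h := neg_one_pow_mul_fwdDiff_iter_sqMulLog_pos one_pos 1 (y := p - 2)
    (by rw [sub_nonneg]; exact_mod_cast hp)
  rw [pow_one, neg_one_mul, neg_pos] at h
  rw [rFn_eq_fwdDiff_iter]
  exact mul_neg_of_pos_of_neg (by positivity) h

theorem rFn_lt_rFn_succ {p : ℕ} (hp : 2 ≤ p) : rFn p < rFn (p + 1) := by
  have h := neg_one_pow_mul_fwdDiff_iter_sqMulLog_pos one_pos 2 (y := p - 2)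
    (by rw [sub_nonneg]; exact_mod_cast hp)
  rw [neg_one_sq, one_mul] at h
  rw [← sub_pos, rFn_succ_sub_rFn]
  exact mul_pos (by positivity) h

theorem rFn_zero : rFn 0 = 4 / π * log 2 := by
  simp only [rFn]
  norm_num
  field_simp
  ring

theorem rFn_one_lt_rFn_two : rFn 1 < rFn 2 := by
  have h : 45 * log 3 < 72 * log 2 := by
    have := log_lt_log (by norm_num) (show (3 : ℝ) ^ 45 < 2 ^ 72 by norm_num)
    rwa [log_pow, log_pow, Nat.cast_ofNat, Nat.cast_ofNat] at this
  have h4 : log 4 = 2 * log 2 := by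
    rw [show (4 : ℝ) = 2 ^ 2 by norm_num, log_pow, Nat.cast_ofNat]
  simp only [rFn]
  norm_num [h4]
  exact mul_lt_mul_of_pos_left (by linarith) (by positivity)

theorem stmt7 :
    rFn 0 = (4 / Real.pi) * Real.log 2 ∧ 0 < rFn 0 ∧
    ∀ p : ℕ, 1 ≤ p → rFn p < rFn (p + 1) ∧ rFn (p + 1) < 0 := by
  refine ⟨rFn_zero, rFn_zero ▸ by positivity, fun p hp => ⟨?_, rFn_neg (by omega)⟩⟩
  rcases hp.eq_or_lt with rfl | hp
  · exact rFn_one_lt_rFn_two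
  · exact rFn_lt_rFn_succ hp
end

section
/- For every integer p ≥ 3, r_p = Σ_{n=2}^∞ c_n · p^{2−2n}, where c_n = (2 − 2^{2n−1}) / (π n (2n−1)(n−1)), and the series converges. In particular each c_n < 0 for n ≥ 2. -/
/-- `c_n = (2 - 2^(2n-1)) / (π n (2n-1)(n-1))`. -/
noncomputable def cR (n : ℕ) : ℝ :=
  (2 - (2 : ℝ) ^ (2 * n - 1)) / (Real.pi * n * (2 * n - 1) * (n - 1))

/-!
Put `E y = (1 + y)² log (1 + y) + (1 - y)² log (1 - y)` (`sqLogSymm`). With `x = 1/p`, the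
bracket defining `r_p` equals `p² (E (2x) - 4 E x)`: the `log p` terms drop out because the
fourth difference of a quadratic vanishes. Since
`E y = (1 + y²) log (1 - y²) + 2y (log (1 + y) - log (1 - y))`, the two logarithmic series give
`E y = 3y² - ∑_{j ≥ 0} y^(2j+4) / ((j+1)(2j+3)(j+2))`, so in `E (2x) - 4 E x` the quadratic
terms cancel and the coefficient of `x^(2j+4)` becomes `2π c_{j+2}`.
-/

open Real

noncomputable def sqLogSymm (y : ℝ) : ℝ :=
  (1 + y) ^ 2 * log (1 + y) + (1 - y) ^ 2 * log (1 - y)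

theorem hasSum_sqLogSymm {y : ℝ} (hy : |y| < 1) :
    HasSum (fun j : ℕ => -(y ^ (2 * j + 4) / ((j + 1) * (2 * j + 3) * (j + 2))))
      (sqLogSymm y - 3 * y ^ 2) := by
  have hLog : HasSum (fun n : ℕ => y ^ (2 * n + 2) / (n + 1)) (-log (1 - y ^ 2)) := by
    have hy2 : |y ^ 2| < 1 := by simpa using (sq_lt_one_iff_abs_lt_one y).mpr hy
    convert hasSum_pow_div_log_of_abs_lt_one hy2 using 2 with n
    ring
  have hArtanh := hasSum_log_sub_log_of_abs_lt_one hy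
  have hLog₁ : HasSum (fun j : ℕ => y ^ (2 * (j + 1) + 2) / ((j + 1 : ℕ) + 1))
      (-log (1 - y ^ 2) - y ^ 2) :=
    (hasSum_nat_add_iff (f := fun n : ℕ => y ^ (2 * n + 2) / (n + 1)) 1).mpr (by simpa using hLog)
  have hArtanh₁ : HasSum (fun j : ℕ => 2 * (1 / (2 * (j + 1 : ℕ) + 1)) * y ^ (2 * (j + 1) + 1))
      (log (1 + y) - log (1 - y) - 2 * y) :=
    (hasSum_nat_add_iff (f := fun k : ℕ => 2 * (1 / (2 * k + 1)) * y ^ (2 * k + 1)) 1).mpr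
      (by simpa using hArtanh)
  have hlogSq : log (1 - y ^ 2) = log (1 + y) + log (1 - y) := by
    have := abs_lt.mp hy
    rw [← log_mul (by linarith) (by linarith)]
    ring_nf
  have hval : -(-log (1 - y ^ 2) - y ^ 2) - y ^ 2 * -log (1 - y ^ 2)
      + 2 * y * (log (1 + y) - log (1 - y) - 2 * y) = sqLogSymm y - 3 * y ^ 2 := by
    rw [sqLogSymm, hlogSq]
    ring
  rw [← hval]
  refine ((hLog₁.neg.sub (hLog.mul_left (y ^ 2))).add (hArtanh₁.mul_left (2 * y))).congr_fun
    fun j => ?_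
  push_cast
  field_simp
  ring

theorem rFn_eq_sqLogSymm {p : ℕ} (hp : 3 ≤ p) :
    rFn p = (p : ℝ) ^ 2 / (2 * π) * (sqLogSymm (2 / p) - 4 * sqLogSymm (1 / p)) := by
  have hq : (3 : ℝ) ≤ p := by exact_mod_cast hp
  have scale : ∀ a : ℝ, -3 < a →
      (1 + a / p) ^ 2 * log (1 + a / p) = (p + a) ^ 2 * (log (p + a) - log p) / p ^ 2 := by
    intro a ha
    rw [← log_div (by linarith) (by linarith)]
    field_simp
  have scale_neg : ∀ a : ℝ, a < 3 →
      (1 - a / p) ^ 2 * log (1 - a / p) = (p - a) ^ 2 * (log (p - a) - log p) / p ^ 2 := by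
    intro a ha
    simpa [sub_eq_add_neg, neg_div] using scale (-a) (by linarith)
  rw [sqLogSymm, sqLogSymm, scale 2 (by norm_num), scale 1 (by norm_num), scale_neg 2 (by norm_num),
    scale_neg 1 (by norm_num), rFn, abs_of_pos (by linarith), abs_of_pos (by linarith)]
  field_simp
  ring

theorem cR_add_two_mul_rpow (n : ℕ) {q : ℝ} (hq : 0 < q) :
    cR (n + 2) * q ^ ((2 : ℝ) - 2 * ((n : ℝ) + 2)) = q ^ 2 / (2 * π) *
      (-((2 / q) ^ (2 * n + 4) / ((n + 1) * (2 * n + 3) * (n + 2)))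
        - 4 * -((1 / q) ^ (2 * n + 4) / ((n + 1) * (2 * n + 3) * (n + 2)))) := by
  rw [show (2 : ℝ) - 2 * ((n : ℝ) + 2) = -((2 * n + 2 : ℕ) : ℝ) by push_cast; ring,
    rpow_neg hq.le, rpow_natCast, cR, show 2 * (n + 2) - 1 = 2 * n + 3 by omega]
  push_cast
  rw [show 2 * ((n : ℝ) + 2) - 1 = 2 * n + 3 by ring, show (n : ℝ) + 2 - 1 = n + 1 by ring,
    div_pow, div_pow, one_pow]
  field_simp
  ring

theorem cR_neg {n : ℕ} (hn : 2 ≤ n) : cR n < 0 := by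
  have hn' : (2 : ℝ) ≤ n := by exact_mod_cast hn
  have h8 : (8 : ℝ) ≤ 2 ^ (2 * n - 1) := by
    calc (8 : ℝ) = 2 ^ 3 := by norm_num
      _ ≤ 2 ^ (2 * n - 1) := pow_le_pow_right₀ (by norm_num) (by omega)
  refine div_neg_of_neg_of_pos (by linarith) ?_
  apply mul_pos (mul_pos (mul_pos pi_pos _) _) <;> linarith

theorem stmt9 (p : ℕ) (hp : 3 ≤ p) :
    HasSum (fun n : ℕ => cR (n + 2) * (p : ℝ) ^ ((2 : ℝ) - 2 * ((n : ℝ) + 2))) (rFn p) ∧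
    ∀ n : ℕ, 2 ≤ n → cR n < 0 := by
  refine ⟨?_, fun n => cR_neg⟩
  have hq : (3 : ℝ) ≤ p := by exact_mod_cast hp
  have h2 : |(2 / p : ℝ)| < 1 := by
    rw [abs_of_pos (by positivity), div_lt_one (by positivity)]; linarith
  have h1 : |(1 / p : ℝ)| < 1 := by
    rw [abs_of_pos (by positivity), div_lt_one (by positivity)]; linarith
  have hval : (p : ℝ) ^ 2 / (2 * π) * ((sqLogSymm (2 / p) - 3 * (2 / p) ^ 2)
      - 4 * (sqLogSymm (1 / p) - 3 * (1 / p) ^ 2)) = rFn p := by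
    rw [rFn_eq_sqLogSymm hp]
    ring
  rw [← hval]
  exact (((hasSum_sqLogSymm h2).sub ((hasSum_sqLogSymm h1).mul_left 4)).mul_left _).congr_fun
    fun n => cR_add_two_mul_rpow n (by positivity)
end
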